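/- arXiv:2305.11259 — 2 statements merged into one kernel-verified Lean document; each statement's English description precedes it below -/
import Mathlib

section
/- Let X be a finite clique complex, q ≥ 1, and suppose X is q-clique-minimal, meaning β_q(X) > 0 but every proper clique subcomplex Y ⊊ X induced by a subgraph of the 1-skeleton has β_q(Y) = 0. Then every vertex of X has degree at least 2q in the 1-skeleton of X, and X has at least 2q + 2 vertices. -/
/-!
Fix a `q`-cycle `z`, `q ≥ 1`, and a vertex `u`. Then `z = cone_u (lk_u z) + del_u z`, where the
link `lk_u z` is a reduced `(q-1)`-cycle in the neighbourhood of `u` and `del_u z` is the part of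
`z` missing `u`. If the link bounds a chain `c` supported in the neighbourhood of `u`, then
`∂(cone_u c) = c + cone_u (lk_u z)`, so `z` differs by a boundary from the cycle `del_u z + c`,
which misses `u`.

Gal's lemma: a reduced `n`-cycle on at most `2n + 1` vertices bounds a chain on the same vertices.
By induction on `n` and on the size of the support: at a vertex `u` of the support, either every
other vertex is a neighbour of `u`, and `c = del_u z` fills the link, or the link has at most
`2n - 1` vertices and is filled by induction; either way `del_u z + c` has a smaller support.

So a nonbounding `q`-cycle needs at least `2q + 2` vertices, and if a vertex `v` had fewer than
`2q` neighbours, the cycle `del_v z + c` would live in the clique complex of `G` with the edges at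
`v` removed, bound there by minimality, and make `z` a boundary.
-/

open Finset

/-- The `q`-dimensional simplices of the clique complex of `G`: cliques with `q+1`
vertices. -/
def CliqueSimplex {V : Type} [Fintype V] [DecidableEq V] (G : SimpleGraph V) (q : ℕ) :
    Type :=
  {σ : Finset V // G.IsClique (σ : Set V) ∧ σ.card = q + 1}

noncomputable instance {V : Type} [Fintype V] [DecidableEq V] (G : SimpleGraph V)
    (q : ℕ) : Fintype (CliqueSimplex G q) := by
  classical
  unfold CliqueSimplex
  infer_instance

/-- The simplicial chain group of the clique complex of `G` in dimension `q`, with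
`ℤ/2` coefficients. -/
abbrev CliqueChain {V : Type} [Fintype V] [DecidableEq V] (G : SimpleGraph V)
    (q : ℕ) : Type :=
  CliqueSimplex G q → ZMod 2

/-- The simplicial boundary map (over `ℤ/2`) of the clique complex of `G`, from
dimension `q` to dimension `q - 1`: the boundary of a `q`-simplex is the sum of its
facets, i.e. its proper subsets of cardinality `q` (which are automatically cliques). -/
noncomputable def cliqueBoundary {V : Type} [Fintype V] [DecidableEq V]
    (G : SimpleGraph V) (q : ℕ) : CliqueChain G q →ₗ[ZMod 2] CliqueChain G (q - 1) where
  toFun f τ := ∑ σ : CliqueSimplex G q, if (τ.1 : Finset V) ⊂ σ.1 then f σ else 0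
  map_add' f g := by
    funext τ
    simp only [Pi.add_apply]
    rw [← Finset.sum_add_distrib]
    exact Finset.sum_congr rfl fun σ _ => by split_ifs <;> simp
  map_smul' c f := by
    funext τ
    simp only [Pi.smul_apply, RingHom.id_apply, smul_eq_mul]
    rw [Finset.mul_sum]
    exact Finset.sum_congr rfl fun σ _ => by split_ifs <;> simp

/-- The `q`-th Betti number (over `ℤ/2`) of the clique complex of `G`, for `q ≥ 1`:
the dimension of the `q`-th simplicial homology, i.e. of the space of `q`-cycles
modulo `q`-boundaries. -/
noncomputable def cliqueBetti {V : Type} [Fintype V] [DecidableEq V]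
    (G : SimpleGraph V) (q : ℕ) : ℕ :=
  Module.finrank (ZMod 2)
    (LinearMap.ker (cliqueBoundary G q) ⧸
      (LinearMap.range (cliqueBoundary G (q + 1))).comap
        (LinearMap.ker (cliqueBoundary G q)).subtype)

lemma SimpleGraph.IsClique.spanningCoe_deleteVerts {V : Type} {G : SimpleGraph V} {s : Set V}
    {v : V} (hs : G.IsClique s) (hv : v ∉ s) :
    ((⊤ : G.Subgraph).deleteVerts {v}).spanningCoe.IsClique s := fun a ha b hb hab => by
  simp only [SimpleGraph.Subgraph.spanningCoe_adj, SimpleGraph.Subgraph.deleteVerts_adj,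
    SimpleGraph.Subgraph.verts_top, SimpleGraph.Subgraph.top_adj, Set.mem_univ,
    Set.mem_singleton_iff, true_and]
  exact ⟨ne_of_mem_of_not_mem ha hv, ne_of_mem_of_not_mem hb hv, hs ha hb hab⟩

theorem cliqueBetti_eq_zero_iff {V : Type} [Fintype V] [DecidableEq V] {G : SimpleGraph V}
    {q : ℕ} : cliqueBetti G q = 0 ↔
      ∀ z, cliqueBoundary G q z = 0 → z ∈ LinearMap.range (cliqueBoundary G (q + 1)) := by
  rw [cliqueBetti, Module.finrank_zero_iff, Submodule.Quotient.subsingleton_iff,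
    Submodule.comap_subtype_eq_top]
  rfl

namespace CliqueChain

variable {V : Type} [Fintype V] [DecidableEq V] {G : SimpleGraph V} {m n : ℕ}

open Classical in
noncomputable def coeff (f : CliqueChain G m) (s : Finset V) : ZMod 2 :=
  if h : G.IsClique (s : Set V) ∧ s.card = m + 1 then f ⟨s, h⟩ else 0

@[simp] lemma coeff_val (f : CliqueChain G m) (σ : CliqueSimplex G m) : f.coeff σ.1 = f σ :=
  dif_pos σ.2

lemma coeff_of_not_simplex (f : CliqueChain G m) {s : Finset V}
    (h : ¬ (G.IsClique (s : Set V) ∧ s.card = m + 1)) : f.coeff s = 0 :=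
  dif_neg h

lemma isClique_of_coeff_ne_zero {f : CliqueChain G m} {s : Finset V} (h : f.coeff s ≠ 0) :
    G.IsClique (s : Set V) ∧ s.card = m + 1 :=
  not_not.1 fun h' => h (coeff_of_not_simplex f h')

lemma coeff_of_card_ne (f : CliqueChain G m) {s : Finset V} (h : s.card ≠ m + 1) :
    f.coeff s = 0 :=
  coeff_of_not_simplex f fun h' => h h'.2

@[simp] lemma coeff_zero (s : Finset V) : (0 : CliqueChain G m).coeff s = 0 := by
  unfold coeff; split_ifs <;> rfl

@[simp] lemma coeff_add (f g : CliqueChain G m) (s : Finset V) :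
    (f + g).coeff s = f.coeff s + g.coeff s := by
  unfold coeff; split_ifs
  · rfl
  · simp

lemma ext_coeff {f g : CliqueChain G m} (h : ∀ s, f.coeff s = g.coeff s) : f = g :=
  funext fun σ => by simpa using h σ.1

lemma coeff_eq_sum (f : CliqueChain G m) (s : Finset V) :
    f.coeff s = ∑ σ : CliqueSimplex G m, if σ.1 = s then f σ else 0 := by
  by_cases hs : G.IsClique (s : Set V) ∧ s.card = m + 1
  · refine (dif_pos hs).trans (Eq.trans ?_ (sum_eq_single_of_mem
      (⟨s, hs⟩ : CliqueSimplex G m) (mem_univ (α := CliqueSimplex G m) _)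
      fun σ _ hσ => if_neg fun h => hσ (Subtype.ext h)).symm)
    exact (if_pos rfl).symm
  · rw [coeff_of_not_simplex f hs]
    refine (sum_eq_zero fun σ _ => if_neg fun (h : σ.1 = s) => hs ?_).symm
    exact h ▸ σ.2

lemma sum_coeff_insert (f : CliqueChain G (n + 1)) {s : Finset V} (hs : s.card = n + 1) :
    ∑ x, f.coeff (insert x s) =
      ∑ σ : CliqueSimplex G (n + 1), if s ⊂ σ.1 then f σ else 0 := by
  simp_rw [coeff_eq_sum f]
  rw [sum_comm]
  refine sum_congr rfl fun σ _ => ?_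
  -- a simplex `σ ⊋ s` with one more vertex is `insert x s` for exactly one `x`
  split_ifs with hsσ
  · obtain ⟨a, ha, hsub⟩ := ssubset_iff.1 hsσ
    have hσ : insert a s = σ.1 := eq_of_subset_of_card_le hsub (by
      rw [card_insert_of_notMem ha, hs, σ.2.2])
    simp_rw [← hσ, insert_inj ha]
    simp
  · refine sum_eq_zero fun x _ => if_neg ?_
    rintro hσ
    refine hsσ (Finset.ssubset_iff_subset_ne.2 ⟨hσ ▸ subset_insert x s, ?_⟩)
    rintro rfl
    have := σ.2.2
    omega

lemma coeff_boundary (f : CliqueChain G (n + 1)) (s : Finset V) :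
    (cliqueBoundary G (n + 1) f).coeff s =
      if s.card = n + 1 then ∑ x, f.coeff (insert x s) else 0 := by
  split_ifs with hs
  · by_cases hcl : G.IsClique (s : Set V)
    · rw [sum_coeff_insert f hs]
      exact dif_pos ⟨hcl, hs⟩
    · rw [coeff_of_not_simplex _ fun h => hcl h.1]
      refine (sum_eq_zero fun x _ => ?_).symm
      by_contra hx
      exact hcl ((isClique_of_coeff_ne_zero hx).1.subset (by simp))
  · exact coeff_of_card_ne _ hs

open Classical in
noncomputable def support (f : CliqueChain G m) : Finset V :=
  univ.filter fun x => ∃ s, f.coeff s ≠ 0 ∧ x ∈ s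

lemma mem_support {f : CliqueChain G m} {x : V} :
    x ∈ f.support ↔ ∃ s, f.coeff s ≠ 0 ∧ x ∈ s := by
  simp [support]

lemma subset_support {f : CliqueChain G m} {s : Finset V} (h : f.coeff s ≠ 0) :
    s ⊆ f.support :=
  fun _ hx => mem_support.2 ⟨s, h, hx⟩

lemma support_subset_iff {f : CliqueChain G m} {A : Finset V} :
    f.support ⊆ A ↔ ∀ s, f.coeff s ≠ 0 → s ⊆ A :=
  ⟨fun h _ hs => (subset_support hs).trans h, fun h _ hx =>
    let ⟨s, hs, hxs⟩ := mem_support.1 hx; h s hs hxs⟩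

@[simp] lemma support_zero : (0 : CliqueChain G m).support = ∅ := by
  simp [support]

lemma support_add (f g : CliqueChain G m) : (f + g).support ⊆ f.support ∪ g.support := by
  refine support_subset_iff.2 fun s hs => ?_
  rw [coeff_add] at hs
  by_cases hf : f.coeff s = 0
  · rw [hf, zero_add] at hs
    exact (subset_support hs).trans subset_union_right
  · exact (subset_support hf).trans subset_union_left

lemma eq_zero_of_support_eq_empty {f : CliqueChain G m} (h : f.support = ∅) : f = 0 := by
  refine ext_coeff fun s => ?_
  by_contra hs
  rw [coeff_zero] at hs
  obtain ⟨x, hx⟩ : s.Nonempty := by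
    rw [← card_pos, (isClique_of_coeff_ne_zero hs).2]; omega
  simpa [h] using subset_support hs hx

lemma support_boundary_subset (f : CliqueChain G (n + 1)) :
    (cliqueBoundary G (n + 1) f).support ⊆ f.support := by
  refine support_subset_iff.2 fun s hs => ?_
  rw [coeff_boundary] at hs
  split_ifs at hs
  · obtain ⟨x, -, hx⟩ := exists_ne_zero_of_sum_ne_zero hs
    exact (subset_insert x s).trans (subset_support hx)
  · exact absurd rfl hs

section Star

variable (u : V)

/-- Vanishes on `ρ ∋ u`, where `insert u ρ = ρ` has the wrong cardinality. -/
noncomputable def link (z : CliqueChain G (n + 1)) : CliqueChain G n :=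
  fun ρ => z.coeff (insert u ρ.1)

noncomputable def cone (f : CliqueChain G n) : CliqueChain G (n + 1) :=
  fun σ => if u ∈ σ.1 then f.coeff (σ.1.erase u) else 0

noncomputable def deletion (f : CliqueChain G m) : CliqueChain G m :=
  fun σ => if u ∈ σ.1 then 0 else f σ

lemma coeff_link (z : CliqueChain G (n + 1)) (s : Finset V) :
    (link u z).coeff s = if u ∈ s then 0 else z.coeff (insert u s) := by
  by_cases hs : G.IsClique (s : Set V) ∧ s.card = n + 1
  · rw [show (link u z).coeff s = z.coeff (insert u s) from dif_pos hs]
    split_ifs with hu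
    · rw [insert_eq_of_mem hu, coeff_of_card_ne z (by omega)]
    · rfl
  · rw [coeff_of_not_simplex _ hs]
    split_ifs with hu
    · rfl
    refine (coeff_of_not_simplex z fun h => hs ⟨h.1.subset (by simp), ?_⟩).symm
    have := h.2
    rw [card_insert_of_notMem hu] at this
    omega

lemma coeff_deletion (f : CliqueChain G m) (s : Finset V) :
    (deletion u f).coeff s = if u ∈ s then 0 else f.coeff s := by
  unfold coeff deletion
  split_ifs <;> rfl

lemma coeff_cone {f : CliqueChain G n} (hf : ∀ x ∈ f.support, G.Adj u x) (s : Finset V) :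
    (cone u f).coeff s = if u ∈ s then f.coeff (s.erase u) else 0 := by
  by_cases hs : G.IsClique (s : Set V) ∧ s.card = n + 1 + 1
  · exact dif_pos hs
  · rw [coeff_of_not_simplex _ hs]
    split_ifs with hu
    · by_contra h
      refine hs ⟨?_, ?_⟩
      · rw [← insert_erase hu, coe_insert, SimpleGraph.isClique_insert]
        exact ⟨(isClique_of_coeff_ne_zero (Ne.symm h)).1,
          fun b hb _ => hf b (subset_support (Ne.symm h) hb)⟩
      · rw [← card_erase_add_one hu, (isClique_of_coeff_ne_zero (Ne.symm h)).2]
    · rfl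

lemma notMem_support_of_adj {f : CliqueChain G m} (hf : ∀ x ∈ f.support, G.Adj u x) :
    u ∉ f.support :=
  fun hu => G.loopless.irrefl u (hf u hu)

lemma coeff_eq_zero_of_adj {f : CliqueChain G m} (hf : ∀ x ∈ f.support, G.Adj u x)
    {s : Finset V} (hu : u ∈ s) : f.coeff s = 0 :=
  not_not.1 fun h => notMem_support_of_adj u hf (subset_support h hu)

lemma support_link_subset (z : CliqueChain G (n + 1)) :
    (link u z).support ⊆ z.support.erase u := by
  refine support_subset_iff.2 fun s hs x hx => ?_
  rw [coeff_link] at hs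
  split_ifs at hs with hu
  · exact absurd rfl hs
  · exact mem_erase.2 ⟨ne_of_mem_of_not_mem hx hu, subset_support hs (mem_insert_of_mem hx)⟩

lemma adj_of_mem_support_link {z : CliqueChain G (n + 1)} {x : V}
    (hx : x ∈ (link u z).support) : G.Adj u x := by
  obtain ⟨s, hs, hxs⟩ := mem_support.1 hx
  rw [coeff_link] at hs
  split_ifs at hs with hu
  · exact absurd rfl hs
  · exact (isClique_of_coeff_ne_zero hs).1 (mem_insert_self u s)
      (mem_insert_of_mem hxs) (ne_of_mem_of_not_mem hxs hu).symm

lemma support_deletion_subset (f : CliqueChain G m) :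
    (deletion u f).support ⊆ f.support.erase u := by
  refine support_subset_iff.2 fun s hs x hx => ?_
  rw [coeff_deletion] at hs
  split_ifs at hs with hu
  · exact absurd rfl hs
  · exact mem_erase.2 ⟨ne_of_mem_of_not_mem hx hu, subset_support hs hx⟩

lemma support_cone_subset {f : CliqueChain G n} (hf : ∀ x ∈ f.support, G.Adj u x) :
    (cone u f).support ⊆ insert u f.support := by
  refine support_subset_iff.2 fun s hs x hx => ?_
  rw [coeff_cone u hf] at hs
  split_ifs at hs with hu
  · rcases eq_or_ne x u with rfl | hxu
    · exact mem_insert_self x _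
    · exact mem_insert_of_mem (subset_support hs (mem_erase.2 ⟨hxu, hx⟩))
  · exact absurd rfl hs

theorem cone_link_add_deletion (z : CliqueChain G (n + 1)) :
    cone u (link u z) + deletion u z = z := by
  refine ext_coeff fun s => ?_
  rw [coeff_add, coeff_cone u fun x => adj_of_mem_support_link u, coeff_deletion, coeff_link]
  by_cases hu : u ∈ s
  · rw [if_pos hu, if_pos hu, if_neg (notMem_erase u s), insert_erase hu, add_zero]
  · rw [if_neg hu, if_neg hu, zero_add]

theorem boundary_cone {c : CliqueChain G (n + 1)} (hc : ∀ x ∈ c.support, G.Adj u x) :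
    cliqueBoundary G (n + 1 + 1) (cone u c) = c + cone (n := n) u (cliqueBoundary G (n + 1) c) := by
  refine ext_coeff fun s => ?_
  rw [coeff_add, coeff_boundary, coeff_cone u fun x hx => hc x (support_boundary_subset c hx),
    coeff_boundary]
  by_cases hs : s.card = n + 1 + 1
  · rw [if_pos hs]
    by_cases hu : u ∈ s
    · rw [coeff_eq_zero_of_adj u hc hu, zero_add, if_pos hu,
        if_pos (by rw [card_erase_of_mem hu, hs]; rfl)]
      refine sum_congr rfl fun x _ => ?_
      rw [coeff_cone u hc, if_pos (mem_insert_of_mem hu)]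
      rcases eq_or_ne x u with rfl | hxu
      · rw [insert_eq_of_mem hu, insert_erase hu, coeff_eq_zero_of_adj x hc hu,
          coeff_of_card_ne c (by rw [card_erase_of_mem hu, hs]; omega)]
      · rw [erase_insert_of_ne hxu]
    · rw [if_neg hu, add_zero, Fintype.sum_eq_single u fun x hxu => ?_]
      · rw [coeff_cone u hc, if_pos (mem_insert_self u s), erase_insert hu]
      · rw [coeff_cone u hc, if_neg (by simp [hu, Ne.symm hxu])]
  · rw [if_neg hs, coeff_of_card_ne c hs, zero_add]
    split_ifs with hu hcard
    · rw [card_erase_of_mem hu] at hcard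
      omega
    · rfl
    · rfl

end Star

/-- A cycle of the augmented chain complex: in dimension `0` this says that the
coefficients of `z` sum to zero. -/
def IsReducedCycle (z : CliqueChain G m) : Prop :=
  ∀ τ : Finset V, τ.card = m → ∑ x, z.coeff (insert x τ) = 0

lemma isReducedCycle_iff {z : CliqueChain G (n + 1)} :
    IsReducedCycle z ↔ cliqueBoundary G (n + 1) z = 0 := by
  refine ⟨fun hz => ext_coeff fun s => ?_, fun hz τ hτ => ?_⟩
  · rw [coeff_boundary, coeff_zero]
    split_ifs with hs
    exacts [hz s hs, rfl]
  · have := congrArg (coeff · τ) hz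
    rwa [coeff_boundary, if_pos hτ, coeff_zero] at this

theorem isReducedCycle_link {z : CliqueChain G (n + 1)} (hz : IsReducedCycle z) (u : V) :
    IsReducedCycle (link u z) := by
  intro τ hτ
  by_cases hu : u ∈ τ
  · exact sum_eq_zero fun x _ => by rw [coeff_link, if_pos (mem_insert_of_mem hu)]
  rw [← hz (insert u τ) (by rw [card_insert_of_notMem hu, hτ])]
  refine sum_congr rfl fun x _ => ?_
  rw [coeff_link]
  rcases eq_or_ne x u with rfl | hxu
  · rw [if_pos (mem_insert_self x τ), insert_idem,
      coeff_of_card_ne z (by rw [card_insert_of_notMem hu, hτ]; omega)]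
  · rw [if_neg (by simp [hu, Ne.symm hxu]), insert_comm]

theorem IsReducedCycle.boundary_deletion {z : CliqueChain G (n + 1)} (hz : IsReducedCycle z)
    (u : V) : cliqueBoundary G (n + 1) (deletion u z) = link u z := by
  refine ext_coeff fun s => ?_
  rw [coeff_boundary, coeff_link]
  by_cases hs : s.card = n + 1
  · rw [if_pos hs]
    by_cases hu : u ∈ s
    · rw [if_pos hu]
      exact sum_eq_zero fun x _ => by rw [coeff_deletion, if_pos (mem_insert_of_mem hu)]
    · have hsplit : ∀ x, (deletion u z).coeff (insert x s) +
          (if x = u then z.coeff (insert u s) else 0) = z.coeff (insert x s) := by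
        intro x
        rw [coeff_deletion]
        rcases eq_or_ne x u with rfl | hxu
        · simp
        · simp [hu, Ne.symm hxu, hxu]
      have := hz s hs
      rw [← sum_congr rfl fun x _ => hsplit x, sum_add_distrib, Fintype.sum_ite_eq'] at this
      rw [if_neg hu]
      exact CharTwo.add_eq_zero.1 this
  · rw [if_neg hs]
    split_ifs with hu
    · rfl
    · exact (coeff_of_card_ne z (by rw [card_insert_of_notMem hu]; omega)).symm

theorem boundary_cone_add {u : V} {z c : CliqueChain G (n + 1)} {b : CliqueChain G (n + 1 + 1)}
    (hc : cliqueBoundary G (n + 1) c = link u z) (hcu : ∀ x ∈ c.support, G.Adj u x)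
    (hb : cliqueBoundary G (n + 1 + 1) b = deletion u z + c) :
    cliqueBoundary G (n + 1 + 1) (cone u c + b) = z := by
  rw [map_add, hb, boundary_cone u hcu, hc]
  calc c + cone u (link u z) + (deletion u z + c)
      = cone u (link u z) + deletion u z + (c + c) := by abel
    _ = z := by rw [ZModModule.add_self, add_zero, cone_link_add_deletion]

theorem IsReducedCycle.boundary_deletion_add {u : V} {z c : CliqueChain G (n + 1)}
    (hz : IsReducedCycle z) (hc : cliqueBoundary G (n + 1) c = link u z) :
    cliqueBoundary G (n + 1) (deletion u z + c) = 0 := by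
  rw [map_add, hz.boundary_deletion, hc, ZModModule.add_self]

lemma eq_zero_of_card_support_le_one {z : CliqueChain G 0} (hz : IsReducedCycle z)
    (h : z.support.card ≤ 1) : z = 0 := by
  refine ext_coeff fun s => ?_
  by_contra hs
  rw [coeff_zero] at hs
  obtain ⟨y, rfl⟩ := card_eq_one.1 (isClique_of_coeff_ne_zero hs).2
  have hy : ∀ x ≠ y, z.coeff {x} = 0 := fun x hxy => not_not.1 fun hx => hxy <|
    card_le_one.1 h x (subset_support hx (mem_singleton_self x)) y
      (subset_support hs (mem_singleton_self y))
  have hsum := hz ∅ rfl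
  simp only [insert_empty] at hsum
  rw [Fintype.sum_eq_single y hy] at hsum
  exact hs hsum

def SmallCyclesBound (G : SimpleGraph V) (n : ℕ) : Prop :=
  ∀ z : CliqueChain G n, IsReducedCycle z → z.support.card ≤ 2 * n + 1 →
    ∃ b : CliqueChain G (n + 1), cliqueBoundary G (n + 1) b = z ∧ b.support ⊆ z.support

theorem exists_link_filling (u : V) (hfill : SmallCyclesBound G n)
    {z : CliqueChain G (n + 1)} (hz : IsReducedCycle z) (hu : u ∈ z.support)
    (hcard : z.support.card ≤ 2 * (n + 1) + 1) :
    ∃ c : CliqueChain G (n + 1), cliqueBoundary G (n + 1) c = link u z ∧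
      (∀ x ∈ c.support, G.Adj u x) ∧ c.support ⊆ z.support.erase u := by
  by_cases hstar : ∀ x ∈ z.support, x ≠ u → G.Adj u x
  · refine ⟨deletion u z, hz.boundary_deletion u, fun x hx => ?_, support_deletion_subset u z⟩
    obtain ⟨hxu, hx⟩ := mem_erase.1 (support_deletion_subset u z hx)
    exact hstar x hx hxu
  push Not at hstar
  obtain ⟨x₀, hx₀, hx₀u, hnadj⟩ := hstar
  have hlink : (link u z).support ⊆ (z.support.erase u).erase x₀ := fun x hx =>
    mem_erase.2
      ⟨fun h => hnadj (h ▸ adj_of_mem_support_link u hx), support_link_subset u z hx⟩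
  obtain ⟨c, hc, hcsupp⟩ := hfill (link u z) (isReducedCycle_link hz u) (by
    have := card_le_card hlink
    rw [card_erase_of_mem (mem_erase.2 ⟨hx₀u, hx₀⟩), card_erase_of_mem hu] at this
    omega)
  exact ⟨c, hc, fun x hx => adj_of_mem_support_link u (hcsupp hx),
    hcsupp.trans (support_link_subset u z)⟩

theorem SmallCyclesBound.succ (hfill : SmallCyclesBound G n) : SmallCyclesBound G (n + 1) := by
  intro z hz hcard
  induction hk : z.support.card using Nat.strong_induction_on generalizing z with
  | _ k ih =>
  obtain h0 | ⟨u, hu⟩ := z.support.eq_empty_or_nonempty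
  · exact ⟨0, by rw [map_zero, eq_zero_of_support_eq_empty h0], by simp⟩
  obtain ⟨c, hc, hcu, hcz⟩ := exists_link_filling u hfill hz hu hcard
  have hsub : (deletion u z + c).support ⊆ z.support.erase u :=
    (support_add _ _).trans (union_subset (support_deletion_subset u z) hcz)
  obtain ⟨b, hb, hbsupp⟩ := ih _ (hk ▸ card_lt_card (hsub.trans_ssubset (erase_ssubset hu)))
    (deletion u z + c) (isReducedCycle_iff.2 (hz.boundary_deletion_add hc))
    ((card_le_card (hsub.trans (erase_subset u _))).trans hcard) rfl
  refine ⟨cone u c + b, ?_, ?_⟩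
  · exact boundary_cone_add hc hcu hb
  · refine (support_add _ _).trans (union_subset ?_ (hbsupp.trans (hsub.trans (erase_subset u _))))
    exact (support_cone_subset u hcu).trans (insert_subset hu (hcz.trans (erase_subset u _)))

theorem smallCyclesBound : ∀ n, SmallCyclesBound G n
  | 0 => fun _ hz h => ⟨0, by rw [map_zero, eq_zero_of_card_support_le_one hz h], by simp⟩
  | n + 1 => (smallCyclesBound n).succ

section Transfer

noncomputable def transfer (G' : SimpleGraph V) (f : CliqueChain G m) : CliqueChain G' m :=
  fun σ => f.coeff σ.1

variable {G' : SimpleGraph V}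

lemma coeff_transfer {f : CliqueChain G m} (hf : ∀ s, f.coeff s ≠ 0 → G'.IsClique (s : Set V))
    (s : Finset V) : (f.transfer G').coeff s = f.coeff s := by
  by_cases hs : G'.IsClique (s : Set V) ∧ s.card = m + 1
  · exact dif_pos hs
  · rw [coeff_of_not_simplex _ hs]
    by_contra h
    exact hs ⟨hf s (Ne.symm h), (isClique_of_coeff_ne_zero (Ne.symm h)).2⟩

lemma coeff_boundary_transfer {f : CliqueChain G (n + 1)}
    (hf : ∀ s, f.coeff s ≠ 0 → G'.IsClique (s : Set V)) (s : Finset V) :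
    (cliqueBoundary G' (n + 1) (f.transfer G')).coeff s = (cliqueBoundary G (n + 1) f).coeff s := by
  simp only [coeff_boundary, coeff_transfer hf]

theorem mem_range_boundary_of_isClique (hle : G' ≤ G) (hG' : cliqueBetti G' (n + 1) = 0)
    {z : CliqueChain G (n + 1)} (hz : cliqueBoundary G (n + 1) z = 0)
    (hzG' : ∀ s, z.coeff s ≠ 0 → G'.IsClique (s : Set V)) :
    z ∈ LinearMap.range (cliqueBoundary G (n + 1 + 1)) := by
  obtain ⟨b, hb⟩ := cliqueBetti_eq_zero_iff.1 hG' (z.transfer G') <| ext_coeff fun s => by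
    rw [coeff_boundary_transfer hzG', hz, coeff_zero, coeff_zero]
  refine ⟨b.transfer G, ext_coeff fun s => ?_⟩
  rw [coeff_boundary_transfer fun s hs => (isClique_of_coeff_ne_zero hs).1.mono hle, hb,
    coeff_transfer hzG']

end Transfer

theorem mem_range_boundary_of_card_le (hV : Fintype.card V ≤ 2 * (n + 1) + 1)
    {z : CliqueChain G (n + 1)} (hz : cliqueBoundary G (n + 1) z = 0) :
    z ∈ LinearMap.range (cliqueBoundary G (n + 1 + 1)) :=
  let ⟨b, hb, _⟩ := smallCyclesBound (n + 1) z (isReducedCycle_iff.2 hz)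
    ((card_le_univ _).trans hV)
  ⟨b, hb⟩

theorem mem_range_boundary_of_ncard_neighborSet_le {v : V}
    (hv : cliqueBetti ((⊤ : G.Subgraph).deleteVerts {v}).spanningCoe (n + 1) = 0)
    (hdeg : (G.neighborSet v).ncard ≤ 2 * n + 1)
    {z : CliqueChain G (n + 1)} (hz : cliqueBoundary G (n + 1) z = 0) :
    z ∈ LinearMap.range (cliqueBoundary G (n + 1 + 1)) := by
  rw [← isReducedCycle_iff] at hz
  have hlink : (link v z).support.card ≤ 2 * n + 1 := by
    rw [← Set.ncard_coe_finset]
    exact (Set.ncard_le_ncard fun x hx => adj_of_mem_support_link v hx).trans hdeg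
  obtain ⟨c, hc, hcsupp⟩ :=
    smallCyclesBound n _ (isReducedCycle_link hz v) hlink
  have hsub := (support_add _ _).trans <|
    union_subset (support_deletion_subset v z) (hcsupp.trans (support_link_subset v z))
  obtain ⟨b, hb⟩ := mem_range_boundary_of_isClique (SimpleGraph.Subgraph.spanningCoe_le _) hv
    (hz.boundary_deletion_add hc) fun s hs =>
      (isClique_of_coeff_ne_zero hs).1.spanningCoe_deleteVerts fun hvs =>
        notMem_erase v _ (hsub (subset_support hs hvs))
  exact ⟨_, boundary_cone_add hc (fun x hx => adj_of_mem_support_link v (hcsupp hx)) hb⟩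

end CliqueChain

/-- Gal–Kahle's theorem on minimal clique cycles: if the clique complex `X` of a
finite simple graph `G` is `q`-clique-minimal for some `q ≥ 1`, i.e. `β_q(X) > 0`
while every proper clique subcomplex (the clique complex of a proper subgraph `H ≠ ⊤`
of `G`) has vanishing `q`-th Betti number, then every vertex of `X` has degree at
least `2q` in the 1-skeleton, and `X` has at least `2q + 2` vertices. -/
theorem cliqueMinimal_degree_and_card
    {V : Type} [Fintype V] [DecidableEq V] (G : SimpleGraph V) (q : ℕ) (hq : 1 ≤ q)
    (hpos : 0 < cliqueBetti G q)
    (hmin : ∀ H : G.Subgraph, H ≠ ⊤ → cliqueBetti H.spanningCoe q = 0) :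
    (∀ v : V, 2 * q ≤ (G.neighborSet v).ncard) ∧ 2 * q + 2 ≤ Fintype.card V := by
  obtain ⟨n, rfl⟩ : ∃ n, q = n + 1 := ⟨q - 1, by omega⟩
  obtain ⟨z, hz, hz_nb⟩ : ∃ z, cliqueBoundary G (n + 1) z = 0 ∧
      z ∉ LinearMap.range (cliqueBoundary G (n + 1 + 1)) := by
    simpa using mt cliqueBetti_eq_zero_iff.2 hpos.ne'
  refine ⟨fun v => ?_, ?_⟩
  · by_contra! hdeg
    have hv := hmin ((⊤ : G.Subgraph).deleteVerts {v}) fun h => by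
      simpa using congrArg (v ∈ ·.verts) h
    exact hz_nb (CliqueChain.mem_range_boundary_of_ncard_neighborSet_le hv (by omega) hz)
  · by_contra! hcard
    exact hz_nb (CliqueChain.mem_range_boundary_of_card_le (by omega) hz)
end

section
/- Let m and q be positive integers with m < 2q, and let G be any simple graph obtained from a recursive attachment process where each vertex t ≥ 3 connects to at most m earlier vertices (and the initial two vertices are joined by one edge). Then the q-th Betti number of the clique complex of G is 0. -/
open Finset

set_option linter.unusedSectionVars false

namespace CliqueAux


variable {V : Type} [Fintype V] [DecidableEq V]

/-- Dimension-free mod-2 boundary: sum of cofaces evaluated, i.e.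
`Bd c τ = ∑_{x ∉ τ} c (insert x τ)`. -/
def Bd (c : Finset V → ZMod 2) : Finset V → ZMod 2 :=
  fun τ => ∑ x ∈ τᶜ, c (insert x τ)

def cone (u : V) (w : Finset V → ZMod 2) : Finset V → ZMod 2 :=
  fun σ => if u ∈ σ then w (σ.erase u) else 0

def lk (u : V) (z : Finset V → ZMod 2) : Finset V → ZMod 2 :=
  fun ρ => if u ∈ ρ then 0 else z (insert u ρ)

lemma two_eq_zero (a : ZMod 2) : a + a = 0 := by revert a; decide

lemma cancel2 (a b : ZMod 2) : (b + a) + b = a := by revert a b; decide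

lemma Bd_add (c d : Finset V → ZMod 2) : Bd (c + d) = Bd c + Bd d := by
  funext τ
  simp [Bd, Finset.sum_add_distrib]

lemma Bd_zero : Bd (0 : Finset V → ZMod 2) = 0 := by
  funext τ; simp [Bd]

lemma Bd_cone (u : V) (w : Finset V → ZMod 2) (τ : Finset V) :
    Bd (cone u w) τ = if u ∈ τ then Bd w (τ.erase u) + w τ else w τ := by
  by_cases hu : u ∈ τ
  · simp only [hu, if_true]
    have h1 : Bd (cone u w) τ = ∑ x ∈ τᶜ, w (insert x (τ.erase u)) := by
      refine Finset.sum_congr rfl fun x hx => ?_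
      have hx' : x ∉ τ := by simpa using hx
      have hxu : x ≠ u := fun h => hx' (h ▸ hu)
      simp [cone, Finset.mem_insert, hu, Finset.erase_insert_of_ne hxu]
    have h2 : Bd w (τ.erase u) = w τ + ∑ x ∈ τᶜ, w (insert x (τ.erase u)) := by
      unfold Bd
      rw [Finset.compl_erase, Finset.sum_insert (by simpa using hu)]
      rw [Finset.insert_erase hu]
    rw [h1, h2]
    exact (cancel2 _ _).symm
  · simp only [hu, if_false]
    unfold Bd
    rw [Finset.sum_eq_single_of_mem u (by simpa using hu)]
    · simp [cone, Finset.erase_insert hu]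
    · intro x hx hxu
      have hx' : x ∉ τ := by simpa using hx
      simp [cone, Finset.mem_insert, hxu, hu, Ne.symm hxu]

lemma Bd_lk (u : V) (z : Finset V → ZMod 2) (hz : Bd z = 0) : Bd (lk u z) = 0 := by
  funext π
  by_cases hu : u ∈ π
  · have : ∀ x ∈ πᶜ, lk u z (insert x π) = 0 := by
      intro x hx; simp [lk, Finset.mem_insert, hu]
    simp only [Bd, Pi.zero_apply]
    exact Finset.sum_eq_zero this
  · have h0 : Bd z (insert u π) = 0 := by rw [hz]; rfl
    show ∑ x ∈ πᶜ, lk u z (insert x π) = 0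
    rw [← Finset.add_sum_erase _ _ (show u ∈ πᶜ by simpa using hu)]
    have hu0 : lk u z (insert u π) = 0 := by simp [lk]
    rw [hu0, zero_add]
    rw [← h0]
    unfold Bd
    rw [show (insert u π)ᶜ = πᶜ.erase u by rw [Finset.compl_insert]]
    refine Finset.sum_congr rfl fun x hx => ?_
    have hxu : x ≠ u := (Finset.mem_erase.1 hx).1
    have hx' : x ∉ π := by
      have := (Finset.mem_erase.1 hx).2; simpa using this
    simp [lk, Finset.mem_insert, hxu, Ne.symm hxu, hx', hu, Finset.insert_comm]

lemma Bd_Bd (c : Finset V → ZMod 2) : Bd (Bd c) = 0 := by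
  funext ρ
  show ∑ x ∈ ρᶜ, Bd c (insert x ρ) = 0
  have : ∀ x ∈ ρᶜ, Bd c (insert x ρ) = ∑ y ∈ ρᶜ.erase x, c (insert y (insert x ρ)) := by
    intro x hx
    unfold Bd
    rw [Finset.compl_insert]
  rw [Finset.sum_congr rfl this, Finset.sum_sigma']
  refine Finset.sum_involution (fun p hp => ⟨p.2, p.1⟩) ?_ ?_ ?_ ?_
  · rintro ⟨x, y⟩ hp
    simp only []
    rw [Finset.insert_comm]
    exact two_eq_zero _
  · rintro ⟨x, y⟩ hp _
    simp only [Finset.mem_sigma] at hp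
    intro h
    have : y = x := congrArg Sigma.fst h
    exact (Finset.mem_erase.1 hp.2).1 this
  · rintro ⟨x, y⟩ hp
    simp only [Finset.mem_sigma] at hp ⊢
    obtain ⟨h1, h2⟩ := hp
    rw [Finset.mem_erase] at h2
    exact ⟨h2.2, Finset.mem_erase.2 ⟨fun h => (h2.1 h.symm), h1⟩⟩
  · rintro ⟨x, y⟩ hp; rfl

lemma eq_of_add (a b : ZMod 2) (h : a + b = 0) : b = a := by revert a b; decide
lemma cancel3 (a c : ZMod 2) : a + (c + a) = c := by revert a c; decide
lemma aa0 (a : ZMod 2) : a + (a + 0) = 0 := by revert a; decide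

lemma cone_ne_zero {u : V} {w : Finset V → ZMod 2} {σ : Finset V} (h : cone u w σ ≠ 0) :
    u ∈ σ ∧ w (σ.erase u) ≠ 0 := by
  by_cases hu : u ∈ σ
  · exact ⟨hu, by simpa [cone, hu] using h⟩
  · exact absurd (by simp [cone, hu]) h

lemma lk_ne_zero {u : V} {z : Finset V → ZMod 2} {ρ : Finset V} (h : lk u z ρ ≠ 0) :
    u ∉ ρ ∧ z (insert u ρ) ≠ 0 := by
  by_cases hu : u ∈ ρ
  · exact absurd (by simp [lk, hu]) h
  · exact ⟨hu, by simpa [lk, hu] using h⟩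

lemma clique_insert_of_adj {G : SimpleGraph V} {ρ : Finset V} {u : V}
    (hcl : G.IsClique (ρ : Set V)) (hadj : ∀ v ∈ ρ, G.Adj u v) :
    G.IsClique ((insert u ρ : Finset V) : Set V) := by
  rw [Finset.coe_insert]
  exact hcl.insert fun b hb _ => hadj b hb

lemma fill (G : SimpleGraph V) :
    ∀ (N k : ℕ) (S : Finset V), k + S.card ≤ N → S.card ≤ 2 * k + 1 →
    ∀ z : Finset V → ZMod 2,
    (∀ σ, z σ ≠ 0 → σ ⊆ S ∧ G.IsClique (σ : Set V) ∧ σ.card = k + 1) →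
    Bd z = 0 →
    ∃ w : Finset V → ZMod 2,
      (∀ σ, w σ ≠ 0 → σ ⊆ S ∧ G.IsClique (σ : Set V) ∧ σ.card = k + 2) ∧ Bd w = z := by
  intro N
  induction N with
  | zero =>
    intro k S hN hS z hz hcyc
    have hz0 : z = 0 := by
      funext σ
      by_contra h
      obtain ⟨h1, h2, h3⟩ := hz σ h
      have hS0 : S = ∅ := Finset.card_eq_zero.1 (by omega)
      have : σ = ∅ := Finset.subset_empty.1 (hS0 ▸ h1)
      rw [this] at h3
      simp at h3
    exact ⟨0, fun σ h => absurd rfl h, by rw [Bd_zero, hz0]⟩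
  | succ N ih =>
    intro k S hN hS z hz hcyc
    classical
    by_cases hz0 : ∀ σ, z σ = 0
    · exact ⟨0, fun σ h => absurd rfl h, by rw [Bd_zero]; funext σ; exact (hz0 σ).symm⟩
    push_neg at hz0
    obtain ⟨σ0, hσ0⟩ := hz0
    by_cases hA : ∀ σ τ, z σ ≠ 0 → z τ ≠ 0 → ∀ x ∈ σ, ∀ y ∈ τ, x ≠ y → G.Adj x y
    · -- Case A : the vertices of the support form a clique; cone off.
      obtain ⟨hσ0S, hσ0cl, hσ0card⟩ := hz σ0 hσ0
      obtain ⟨u, hu⟩ := Finset.card_pos.1 (show 0 < σ0.card by omega)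
      set zoff : Finset V → ZMod 2 := fun σ => if u ∈ σ then 0 else z σ with hzoffdef
      have hzoff_ne : ∀ ρ, zoff ρ ≠ 0 → u ∉ ρ ∧ z ρ ≠ 0 := by
        intro ρ h
        by_cases h' : u ∈ ρ
        · exact absurd (by simp [hzoffdef, h']) h
        · exact ⟨h', by simpa [hzoffdef, h'] using h⟩
      refine ⟨cone u zoff, ?_, ?_⟩
      · intro σ hσ
        obtain ⟨huσ, h2⟩ := cone_ne_zero hσ
        obtain ⟨huρ, h3⟩ := hzoff_ne _ h2
        obtain ⟨hρS, hρcl, hρcard⟩ := hz _ h3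
        have hσeq : σ = insert u (σ.erase u) := (Finset.insert_erase huσ).symm
        refine ⟨?_, ?_, ?_⟩
        · rw [hσeq]
          exact Finset.insert_subset (hσ0S hu) hρS
        · rw [hσeq]
          refine clique_insert_of_adj hρcl fun v hv => ?_
          have hvu : v ≠ u := fun h => huρ (h ▸ hv)
          exact (hA _ _ h3 hσ0 v hv u hu hvu).symm
        · rw [hσeq, Finset.card_insert_of_notMem huρ, hρcard]
      · funext τ
        rw [Bd_cone]
        by_cases huτ : u ∈ τ
        · rw [if_pos huτ]
          have h1 : zoff τ = 0 := by simp [hzoffdef, huτ]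
          rw [h1, add_zero]
          have huρ : u ∉ τ.erase u := Finset.notMem_erase u τ
          have humem : u ∈ (τ.erase u)ᶜ := by simpa using huρ
          have hsplit : Bd z (τ.erase u) =
              z (insert u (τ.erase u)) + ∑ x ∈ (τ.erase u)ᶜ.erase u, z (insert x (τ.erase u)) := by
            unfold Bd
            rw [← Finset.add_sum_erase _ _ humem]
          have h2 : Bd zoff (τ.erase u) = ∑ x ∈ (τ.erase u)ᶜ.erase u, z (insert x (τ.erase u)) := by
            unfold Bd
            rw [← Finset.add_sum_erase _ _ humem]
            have h0 : zoff (insert u (τ.erase u)) = 0 := by simp [hzoffdef]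
            rw [h0, zero_add]
            refine Finset.sum_congr rfl fun x hx => ?_
            have hxu : x ≠ u := (Finset.mem_erase.1 hx).1
            simp [hzoffdef, Finset.mem_insert, Ne.symm hxu, huρ]
          have h3 : Bd z (τ.erase u) = 0 := by rw [hcyc]; rfl
          rw [h3] at hsplit
          rw [h2, eq_of_add _ _ hsplit.symm, Finset.insert_erase huτ]
        · rw [if_neg huτ]
          simp [hzoffdef, huτ]
    · -- Case B : two non-adjacent support vertices; use the link at x.
      push_neg at hA
      obtain ⟨σ1, τ1, hσ1, hτ1, x, hx, y, hy, hxy, hnadj⟩ := hA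
      have hxS : x ∈ S := (hz σ1 hσ1).1 hx
      have hyS : y ∈ S := (hz τ1 hτ1).1 hy
      obtain _ | K := k
      · exact absurd hS (by have := Finset.one_lt_card.2 ⟨x, hxS, y, hyS, hxy⟩; omega)
      set S' : Finset V := S.filter (fun v => G.Adj x v) with hS'def
      have hS'sub : S' ⊆ (S.erase y).erase x := by
        intro v hv
        rw [hS'def, Finset.mem_filter] at hv
        refine Finset.mem_erase.2 ⟨fun h => G.irrefl (h ▸ hv.2), Finset.mem_erase.2
          ⟨fun h => hnadj (h ▸ hv.2), hv.1⟩⟩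
      have hS2 : 1 < S.card := Finset.one_lt_card.2 ⟨x, hxS, y, hyS, hxy⟩
      have hS'le : S'.card ≤ S.card - 2 := by
        have h1 := Finset.card_le_card hS'sub
        have h2 : ((S.erase y).erase x).card = S.card - 2 := by
          rw [Finset.card_erase_of_mem (Finset.mem_erase.2 ⟨hxy, hxS⟩),
            Finset.card_erase_of_mem hyS]
          omega
        omega
      have hS'card : S'.card ≤ 2 * K + 1 := by omega
      have hxS' : x ∉ S' := fun h => G.irrefl ((Finset.mem_filter.1 h).2)
      have hlcyc := Bd_lk x z hcyc
      have hlsupp : ∀ ρ, lk x z ρ ≠ 0 →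
          ρ ⊆ S' ∧ G.IsClique (ρ : Set V) ∧ ρ.card = K + 1 := by
        intro ρ h
        obtain ⟨hxρ, hzρ⟩ := lk_ne_zero h
        obtain ⟨hsub, hcl, hcard⟩ := hz _ hzρ
        have hρcl : G.IsClique (ρ : Set V) :=
          hcl.subset (by rw [Finset.coe_insert]; exact Set.subset_insert _ _)
        refine ⟨?_, hρcl, ?_⟩
        · intro v hv
          rw [hS'def, Finset.mem_filter]
          refine ⟨hsub (Finset.mem_insert_of_mem hv), ?_⟩
          have hvx : x ≠ v := fun h => hxρ (h ▸ hv)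
          exact hcl (by simp) (by simp [hv]) hvx
        · have := Finset.card_insert_of_notMem hxρ
          omega
      have hNlink : K + S'.card ≤ N := by omega
      obtain ⟨w', hw's, hw'b⟩ := ih K S' hNlink hS'card (lk x z) hlsupp hlcyc
      have hw'x : ∀ τ, x ∈ τ → w' τ = 0 := by
        intro τ hτ
        by_contra h
        exact hxS' ((hw's τ h).1 hτ)
      set z' : Finset V → ZMod 2 := z + Bd (cone x w') with hz'def
      have hz'1 : ∀ τ, x ∈ τ → z' τ = 0 := by
        intro τ hτ
        rw [hz'def]
        show z τ + Bd (cone x w') τ = 0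
        rw [Bd_cone, if_pos hτ, hw'x τ hτ]
        have : Bd w' (τ.erase x) = z τ := by
          rw [hw'b]
          have hxτ : x ∉ τ.erase x := Finset.notMem_erase x τ
          simp [lk, hxτ, Finset.insert_erase hτ]
        rw [this]
        exact aa0 _
      have hz'2 : ∀ τ, x ∉ τ → z' τ = z τ + w' τ := by
        intro τ hτ
        rw [hz'def]
        show z τ + Bd (cone x w') τ = z τ + w' τ
        rw [Bd_cone, if_neg hτ]
      have hz'supp : ∀ τ, z' τ ≠ 0 →
          τ ⊆ S.erase x ∧ G.IsClique (τ : Set V) ∧ τ.card = K + 1 + 1 := by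
        intro τ h
        have hxτ : x ∉ τ := fun hc => h (hz'1 τ hc)
        rw [hz'2 τ hxτ] at h
        by_cases hzτ : z τ = 0
        · have hw : w' τ ≠ 0 := by
            intro hc; exact h (by rw [hzτ, hc, add_zero])
          obtain ⟨hsub, hcl, hcard⟩ := hw's τ hw
          refine ⟨fun v hv => ?_, hcl, by omega⟩
          have := hsub hv
          rw [hS'def, Finset.mem_filter] at this
          exact Finset.mem_erase.2 ⟨fun hh => G.irrefl (hh ▸ this.2), this.1⟩
        · obtain ⟨hsub, hcl, hcard⟩ := hz τ hzτ
          exact ⟨Finset.subset_erase.2 ⟨hsub, hxτ⟩, hcl, hcard⟩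
      have hz'cyc : Bd z' = 0 := by
        rw [hz'def, Bd_add, hcyc, Bd_Bd, add_zero]
      have hNout : (K + 1) + (S.erase x).card ≤ N := by
        rw [Finset.card_erase_of_mem hxS]
        omega
      have hScard' : (S.erase x).card ≤ 2 * (K + 1) + 1 := by
        have := Finset.card_erase_of_mem hxS
        omega
      obtain ⟨w'', hw''s, hw''b⟩ := ih (K + 1) (S.erase x) hNout hScard' z' hz'supp hz'cyc
      refine ⟨cone x w' + w'', ?_, ?_⟩
      · intro σ hσ
        by_cases hW : cone x w' σ = 0
        · have hw : w'' σ ≠ 0 := by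
            intro hc
            exact hσ (by show cone x w' σ + w'' σ = 0; rw [hW, hc, add_zero])
          obtain ⟨hsub, hcl, hcard⟩ := hw''s σ hw
          exact ⟨hsub.trans (Finset.erase_subset x S), hcl, hcard⟩
        · obtain ⟨hxσ, hws⟩ := cone_ne_zero hW
          obtain ⟨hsub, hcl, hcard⟩ := hw's _ hws
          have hσeq : σ = insert x (σ.erase x) := (Finset.insert_erase hxσ).symm
          have hadj : ∀ v ∈ σ.erase x, G.Adj x v := fun v hv =>
            (Finset.mem_filter.1 (hsub hv)).2
          refine ⟨?_, ?_, ?_⟩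
          · rw [hσeq]
            exact Finset.insert_subset hxS
              (hsub.trans ((Finset.filter_subset _ S)))
          · rw [hσeq]
            exact clique_insert_of_adj hcl hadj
          · rw [hσeq, Finset.card_insert_of_notMem (Finset.notMem_erase x σ), hcard]
      · rw [Bd_add, hw''b]
        funext τ
        show Bd (cone x w') τ + z' τ = z τ
        rw [hz'def]
        show Bd (cone x w') τ + (z τ + Bd (cone x w') τ) = z τ
        exact cancel3 _ _

lemma fill2 {T : ℕ} (m q : ℕ) (hq : 1 ≤ q) (hmq : m < 2 * q) (G : SimpleGraph (Fin T))
    (hout : ∀ t : Fin T, {s : Fin T | G.Adj t s ∧ s < t}.ncard ≤ m) :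
    ∀ (n : ℕ) (z : Finset (Fin T) → ZMod 2),
    (∀ σ, z σ ≠ 0 → G.IsClique (σ : Set (Fin T)) ∧ σ.card = q + 1 ∧ ∀ x ∈ σ, x.val < n) →
    Bd z = 0 →
    ∃ w : Finset (Fin T) → ZMod 2,
      (∀ σ : Finset (Fin T), w σ ≠ 0 → G.IsClique (σ : Set (Fin T)) ∧ σ.card = q + 2) ∧
      Bd w = z := by
  intro n
  induction n with
  | zero =>
    intro z hz hcyc
    have hz0 : z = 0 := by
      funext σ; by_contra h
      obtain ⟨_, h2, h3⟩ := hz σ h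
      obtain ⟨v, hv⟩ := Finset.card_pos.1 (show 0 < σ.card by omega)
      exact absurd (h3 v hv) (by omega)
    exact ⟨0, fun σ h => absurd rfl h, by rw [Bd_zero, hz0]⟩
  | succ n ih =>
    intro z hz hcyc
    classical
    by_cases hTn : T ≤ n
    · refine ih z (fun σ h => ⟨(hz σ h).1, (hz σ h).2.1, fun x hx => ?_⟩) hcyc
      have := x.isLt; omega
    push_neg at hTn
    set u : Fin T := ⟨n, hTn⟩ with hudef
    have huval : u.val = n := rfl
    set S' : Finset (Fin T) := univ.filter (fun v => G.Adj u v ∧ v < u) with hS'def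
    have hS'card : S'.card ≤ m := by
      have h1 := hout u
      have h2 : {s : Fin T | G.Adj u s ∧ s < u} = (S' : Set (Fin T)) := by
        ext s; simp [hS'def]
      rw [h2, Set.ncard_coe_finset] at h1
      exact h1
    have hS'mem : ∀ v ∈ S', G.Adj u v ∧ v < u := fun v hv => (Finset.mem_filter.1 hv).2
    have huS' : u ∉ S' := fun h => lt_irrefl u (hS'mem u h).2
    have hlcyc := Bd_lk u z hcyc
    have hlsupp : ∀ ρ, lk u z ρ ≠ 0 →
        ρ ⊆ S' ∧ G.IsClique (ρ : Set (Fin T)) ∧ ρ.card = (q - 1) + 1 := by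
      intro ρ h
      obtain ⟨huρ, hzρ⟩ := lk_ne_zero h
      obtain ⟨hcl, hcard, hlt⟩ := hz _ hzρ
      have hρcl : G.IsClique (ρ : Set (Fin T)) :=
        hcl.subset (by rw [Finset.coe_insert]; exact Set.subset_insert _ _)
      refine ⟨?_, hρcl, by have := Finset.card_insert_of_notMem huρ; omega⟩
      intro v hv
      rw [hS'def, Finset.mem_filter]
      have hvu : v ≠ u := fun h => huρ (h ▸ hv)
      have hadj : G.Adj u v := hcl (by simp) (by simp [hv]) (Ne.symm hvu)
      refine ⟨Finset.mem_univ v, hadj, ?_⟩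
      have h1 := hlt v (Finset.mem_insert_of_mem hv)
      have h2 : v.val ≠ n := fun hh => hvu (Fin.ext (hh.trans huval.symm))
      rw [Fin.lt_def, huval]
      omega
    obtain ⟨w', hw's, hw'b⟩ := fill G ((q - 1) + S'.card) (q - 1) S' le_rfl
      (by omega) (lk u z) hlsupp hlcyc
    have hw'x : ∀ τ, u ∈ τ → w' τ = 0 := by
      intro τ hτ
      by_contra h
      exact huS' ((hw's τ h).1 hτ)
    set z' : Finset (Fin T) → ZMod 2 := z + Bd (cone u w') with hz'def
    have hz'1 : ∀ τ, u ∈ τ → z' τ = 0 := by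
      intro τ hτ
      show z τ + Bd (cone u w') τ = 0
      rw [Bd_cone, if_pos hτ, hw'x τ hτ]
      have : Bd w' (τ.erase u) = z τ := by
        rw [hw'b]
        have hxτ : u ∉ τ.erase u := Finset.notMem_erase u τ
        simp [lk, hxτ, Finset.insert_erase hτ]
      rw [this]
      exact aa0 _
    have hz'2 : ∀ τ, u ∉ τ → z' τ = z τ + w' τ := by
      intro τ hτ
      show z τ + Bd (cone u w') τ = z τ + w' τ
      rw [Bd_cone, if_neg hτ]
    have hz'supp : ∀ τ, z' τ ≠ 0 →
        G.IsClique (τ : Set (Fin T)) ∧ τ.card = q + 1 ∧ ∀ x ∈ τ, x.val < n := by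
      intro τ h
      have hxτ : u ∉ τ := fun hc => h (hz'1 τ hc)
      rw [hz'2 τ hxτ] at h
      by_cases hzτ : z τ = 0
      · have hw : w' τ ≠ 0 := fun hc => h (by rw [hzτ, hc, add_zero])
        obtain ⟨hsub, hcl, hcard⟩ := hw's τ hw
        refine ⟨hcl, by omega, fun x hx => ?_⟩
        have := (hS'mem x (hsub hx)).2
        rw [Fin.lt_def, huval] at this
        exact this
      · obtain ⟨hcl, hcard, hlt⟩ := hz τ hzτ
        refine ⟨hcl, hcard, fun x hx => ?_⟩
        have h1 := hlt x hx
        have h2 : x.val ≠ n := fun hh => hxτ ((Fin.ext (hh.trans huval.symm) : x = u) ▸ hx)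
        omega
    have hz'cyc : Bd z' = 0 := by
      rw [hz'def, Bd_add, hcyc, Bd_Bd, add_zero]
    obtain ⟨w'', hw''s, hw''b⟩ := ih z' hz'supp hz'cyc
    refine ⟨cone u w' + w'', ?_, ?_⟩
    · intro σ hσ
      by_cases hW : cone u w' σ = 0
      · have hw : w'' σ ≠ 0 := fun hc =>
          hσ (by show cone u w' σ + w'' σ = 0; rw [hW, hc, add_zero])
        exact hw''s σ hw
      · obtain ⟨hxσ, hws⟩ := cone_ne_zero hW
        obtain ⟨hsub, hcl, hcard⟩ := hw's _ hws
        have hσeq : σ = insert u (σ.erase u) := (Finset.insert_erase hxσ).symm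
        have hadj : ∀ v ∈ σ.erase u, G.Adj u v := fun v hv => (hS'mem v (hsub hv)).1
        refine ⟨?_, ?_⟩
        · rw [hσeq]
          exact clique_insert_of_adj hcl hadj
        · rw [hσeq, Finset.card_insert_of_notMem (Finset.notMem_erase u σ)]
          omega
    · rw [Bd_add, hw''b]
      funext τ
      show Bd (cone u w') τ + z' τ = z τ
      show Bd (cone u w') τ + (z τ + Bd (cone u w') τ) = z τ
      exact cancel3 _ _

lemma Bd_eq_sum_ssubset (c : Finset V → ZMod 2) (k : ℕ)
    (hc : ∀ σ, c σ ≠ 0 → σ.card = k + 1) (τ : Finset V) (hτ : τ.card = k) :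
    Bd c τ = ∑ σ ∈ univ.filter (fun σ : Finset V => τ ⊂ σ), c σ := by
  classical
  have h1 : ∑ σ ∈ univ.filter (fun σ : Finset V => τ ⊂ σ), c σ
      = ∑ σ ∈ univ.filter (fun σ : Finset V => τ ⊂ σ ∧ σ.card = k + 1), c σ := by
    symm
    refine Finset.sum_subset ?_ ?_
    · intro σ h
      rw [Finset.mem_filter] at h ⊢
      exact ⟨h.1, h.2.1⟩
    · intro σ h1 h2
      by_contra hc0
      have h3 := hc σ hc0
      rw [Finset.mem_filter] at h1 h2
      exact h2 ⟨h1.1, h1.2, h3⟩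
  rw [h1]
  unfold Bd
  refine Finset.sum_bij (fun x _ => insert x τ) ?_ ?_ ?_ ?_
  · intro x hx
    have hx' : x ∉ τ := by simpa using hx
    rw [Finset.mem_filter]
    exact ⟨Finset.mem_univ _, Finset.ssubset_insert hx',
      by rw [Finset.card_insert_of_notMem hx', hτ]⟩
  · intro x hx y hy h
    have hx' : x ∉ τ := by simpa using hx
    have h' : insert x τ = insert y τ := h
    have : x ∈ insert y τ := h' ▸ Finset.mem_insert_self x τ
    rcases Finset.mem_insert.1 this with h' | h'
    · exact h'
    · exact absurd h' hx'
  · intro σ hσ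
    rw [Finset.mem_filter] at hσ
    obtain ⟨-, hss, hcard⟩ := hσ
    obtain ⟨a, haσ, haτ⟩ := Finset.exists_of_ssubset hss
    refine ⟨a, by simpa using haτ, ?_⟩
    refine Finset.eq_of_subset_of_card_le (Finset.insert_subset haσ hss.subset) ?_
    rw [Finset.card_insert_of_notMem haτ, hτ, hcard]
  · intro x hx; rfl

lemma subtype_sum (G : SimpleGraph V) (j : ℕ) (c : Finset V → ZMod 2)
    (hc : ∀ σ, c σ ≠ 0 → G.IsClique (σ : Set V) ∧ σ.card = j + 1) (τ : Finset V) :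
    ∑ σ : CliqueSimplex G j, (if τ ⊂ σ.1 then c σ.1 else 0)
      = ∑ σ ∈ univ.filter (fun σ : Finset V => τ ⊂ σ), c σ := by
  classical
  rw [Finset.sum_filter]
  have h2 : ∑ σ ∈ univ.filter
        (fun σ : Finset V => G.IsClique (σ : Set V) ∧ σ.card = j + 1),
        (if τ ⊂ σ then c σ else 0)
      = ∑ σ : CliqueSimplex G j, (if τ ⊂ σ.1 then c σ.1 else 0) := by
    exact Finset.sum_subtype _ (by intro σ; simp) _
  rw [← h2]
  refine Finset.sum_subset (Finset.filter_subset _ _) ?_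
  intro σ _ h2'
  rw [Finset.mem_filter] at h2'
  by_cases hss : τ ⊂ σ
  · rw [if_pos hss]
    by_contra hc0
    exact h2' ⟨Finset.mem_univ _, hc σ hc0⟩
  · rw [if_neg hss]


end CliqueAux


open CliqueAux

/-- If `m < 2q` and `G` is a simple graph on vertices `0, 1, ..., T-1` obtained from a
recursive attachment process — the initial two vertices are joined by an edge, and
every vertex has at most `m` neighbours among the earlier vertices — then the `q`-th
Betti number of the clique complex of `G` vanishes. -/
theorem cliqueBetti_eq_zero_of_boundedAttachment
    (T m q : ℕ) (hT : 2 ≤ T) (hm : 1 ≤ m) (hq : 1 ≤ q) (hmq : m < 2 * q)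
    (G : SimpleGraph (Fin T))
    (hbase : G.Adj ⟨0, by omega⟩ ⟨1, by omega⟩)
    (hout : ∀ t : Fin T, {s : Fin T | G.Adj t s ∧ s < t}.ncard ≤ m) :
    cliqueBetti G q = 0 := by
  classical
  have key : ∀ f : CliqueChain G q, cliqueBoundary G q f = 0 →
      ∃ g : CliqueChain G (q + 1), cliqueBoundary G (q + 1) g = f := by
    intro f hf
    set zext : Finset (Fin T) → ZMod 2 := fun σ =>
      if h : G.IsClique (σ : Set (Fin T)) ∧ σ.card = q + 1 then f ⟨σ, h⟩ else 0
      with hzext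
    have hzsupp : ∀ σ, zext σ ≠ 0 →
        G.IsClique (σ : Set (Fin T)) ∧ σ.card = q + 1 := by
      intro σ h
      by_cases hP : G.IsClique (σ : Set (Fin T)) ∧ σ.card = q + 1
      · exact hP
      · exact absurd (by simp [hzext, hP]) h
    have hzval : ∀ σ : CliqueSimplex G q, zext σ.1 = f σ := by
      intro σ
      rw [hzext]
      simp only [dif_pos σ.2]
      rfl
    have hzcyc : Bd zext = 0 := by
      funext τ
      by_cases hτP : G.IsClique (τ : Set (Fin T)) ∧ τ.card = q
      · have hτq : τ.card = q := hτP.2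
        have hc : ∀ σ, zext σ ≠ 0 → σ.card = q + 1 := fun σ h => (hzsupp σ h).2
        rw [Pi.zero_apply, Bd_eq_sum_ssubset zext q hc τ hτq,
          ← subtype_sum G q zext hzsupp τ]
        have hτ' : G.IsClique (τ : Set (Fin T)) ∧ τ.card = (q - 1) + 1 :=
          ⟨hτP.1, by omega⟩
        have h0 : (cliqueBoundary G q f) ⟨τ, hτ'⟩ = 0 := by rw [hf]; rfl
        have h1 : (cliqueBoundary G q f) ⟨τ, hτ'⟩
            = ∑ σ : CliqueSimplex G q, if τ ⊂ σ.1 then f σ else 0 := rfl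
        have h2 : ∑ σ : CliqueSimplex G q, (if τ ⊂ σ.1 then zext σ.1 else 0)
            = ∑ σ : CliqueSimplex G q, if τ ⊂ σ.1 then f σ else 0 :=
          Finset.sum_congr rfl fun σ _ => by rw [hzval σ]
        rw [h2, ← h1]
        exact h0
      · refine Finset.sum_eq_zero fun x hx => ?_
        by_contra h
        obtain ⟨hcl, hcard⟩ := hzsupp _ h
        have hx' : x ∉ τ := by simpa using hx
        refine hτP ⟨hcl.subset (by rw [Finset.coe_insert]; exact Set.subset_insert _ _), ?_⟩
        have := Finset.card_insert_of_notMem hx'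
        omega
    obtain ⟨w, hwsupp, hwb⟩ := fill2 m q hq hmq G hout T zext
      (fun σ h => ⟨(hzsupp σ h).1, (hzsupp σ h).2, fun x _ => x.isLt⟩) hzcyc
    refine ⟨fun σ => w σ.1, ?_⟩
    funext τ
    have hτcard : (τ.1 : Finset (Fin T)).card = q + 1 := τ.2.2
    have hc : ∀ σ, w σ ≠ 0 → σ.card = (q + 1) + 1 := fun σ h => (hwsupp σ h).2
    have h1 : (cliqueBoundary G (q + 1) (fun σ => w σ.1)) τ
        = ∑ σ : CliqueSimplex G (q + 1), if (τ.1 : Finset (Fin T)) ⊂ σ.1 then w σ.1 else 0 := rfl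
    have hwsupp' : ∀ σ : Finset (Fin T), w σ ≠ 0 →
        G.IsClique (σ : Set (Fin T)) ∧ σ.card = (q + 1) + 1 := by
      intro σ h
      obtain ⟨a, b⟩ := hwsupp σ h
      exact ⟨a, by omega⟩
    rw [h1, subtype_sum G (q + 1) w hwsupp' τ.1,
      ← Bd_eq_sum_ssubset w (q + 1) hc τ.1 hτcard, hwb]
    exact hzval τ
  have htop : (LinearMap.range (cliqueBoundary G (q + 1))).comap
      (LinearMap.ker (cliqueBoundary G q)).subtype = ⊤ := by
    rw [Submodule.eq_top_iff']
    rintro ⟨f, hf⟩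
    rw [Submodule.mem_comap]
    obtain ⟨g, hg⟩ := key f (LinearMap.mem_ker.1 hf)
    exact ⟨g, hg⟩
  unfold cliqueBetti
  rw [htop]
  have hsub : Subsingleton (LinearMap.ker (cliqueBoundary G q) ⧸
      (⊤ : Submodule (ZMod 2) (LinearMap.ker (cliqueBoundary G q)))) :=
    Submodule.Quotient.subsingleton_iff.mpr rfl
  exact Module.finrank_zero_of_subsingleton
end
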